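/- arXiv:math-ph/0609021 — 3 statements merged into one kernel-verified Lean document; each statement's English description precedes it below -/
import Mathlib

section
/- Let n ≥ 1 and let f : ℝ → ℝ be of class C^{n+1} with ‖f‖_{C^{n+1}} := Σ_{k=0}^{n+1} sup_x |f^{(k)}(x)| = A⁺ < ∞ and Σ_{k=0}^{n} |f^{(k)}(x)| ≥ A⁻ > 0 for all x ∈ ℝ. Then there exists a constant c > 0 depending only on A⁺, A⁻ and n such that for every σ with 0 < σ ≤ A⁻/2 and every bounded interval Δ ⊂ ℝ, the set Γ_σ = {x ∈ ℝ : |f(x)| ≤ σ} has a finite number of connected components inside Δ, and this number does not exceed c(|Δ| + 1), where |Δ| denotes the length of Δ. -/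
/-!
Near a point `x₀` with `|f x₀| ≤ σ ≤ A⁻/2`, some derivative `f^{(k)}`, `1 ≤ k ≤ n`, has
`|f^{(k)} x₀| ≥ A⁻/(2n)`; since `|f^{(k+1)}| ≤ A⁺`, it stays nonzero on an interval of length
`δ ≍ A⁻/(n A⁺)` containing `x₀`. By Rolle's theorem `f = ±σ` then has at most `k ≤ n` solutions on
that interval each. Two distinct components of `Γ_σ` are separated by a point where `|f| = σ`,
so at most `2n + 1` components meet such an interval, and `Δ` is covered by `|Δ|/δ + 1` of them.
-/

open Set

/-- `Finset.card_le_of_interleaved` with `x ≤ z` in place of `x < z`: the point where `|f| = σ`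
between two components of `Γ_σ` may be the left one. -/
theorem Set.encard_le_encard_add_one_of_forall_exists_mem_Ico {α : Type*} [LinearOrder α]
    {s t : Set α} (h : ∀ x ∈ s, ∀ y ∈ s, x < y → ∃ z ∈ t, x ≤ z ∧ z < y) :
    s.encard ≤ t.encard + 1 := by
  rcases t.finite_or_infinite with ht | ht
  swap
  · simp [ht.encard_eq]
  set φ : α → WithTop α := fun x => (ht.toFinset.filter (x ≤ ·)).min
  have hφ : StrictMonoOn φ s := by
    intro x hx y hy hxy
    obtain ⟨z, hzt, hxz, hzy⟩ := h x hx y hy hxy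
    calc φ x ≤ z := Finset.min_le (Finset.mem_filter.2 ⟨ht.mem_toFinset.2 hzt, hxz⟩)
      _ < φ y := (Finset.lt_inf_iff (WithTop.coe_lt_top z)).2 fun w hw =>
          WithTop.coe_lt_coe.2 (hzy.trans_le (Finset.mem_filter.1 hw).2)
  have hmaps : MapsTo φ s (insert ⊤ (WithTop.some '' t)) := by
    intro x _
    have := Finset.insert_subset_insert ⊤ (Finset.image_subset_image (f := WithTop.some)
      (Finset.filter_subset (x ≤ ·) ht.toFinset)) (Finset.min_mem_insert_top_image_coe _)
    rw [Finset.mem_insert, Finset.mem_image] at this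
    rcases this with h | ⟨z, hz, hφz⟩
    · exact Or.inl h
    · exact Or.inr ⟨z, ht.mem_toFinset.1 hz, hφz⟩
  calc s.encard ≤ (insert ⊤ (WithTop.some '' t)).encard :=
        encard_le_encard_of_injOn hmaps hφ.injOn
    _ ≤ (WithTop.some '' t).encard + 1 := encard_insert_le _ _
    _ = t.encard + 1 := by rw [WithTop.coe_injective.encard_image]

theorem encard_Icc_inter_preimage_le_deriv {g : ℝ → ℝ} (hg : Differentiable ℝ g)
    (u v c : ℝ) :
    (Icc u v ∩ g ⁻¹' {c}).encard ≤ (Icc u v ∩ deriv g ⁻¹' {0}).encard + 1 := by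
  refine encard_le_encard_add_one_of_forall_exists_mem_Ico fun x hx y hy hxy => ?_
  obtain ⟨z, hz, hgz⟩ :=
    exists_deriv_eq_zero hxy hg.continuous.continuousOn (hx.2.trans hy.2.symm)
  exact ⟨z, ⟨⟨hx.1.1.trans hz.1.le, hz.2.le.trans hy.1.2⟩, hgz⟩, hz.1.le, hz.2⟩

theorem encard_Icc_inter_preimage_le {k : ℕ} {g : ℝ → ℝ} (hg : ContDiff ℝ (k + 1) g)
    {u v : ℝ} (hk : ∀ y ∈ Icc u v, iteratedDeriv (k + 1) g y ≠ 0) (c : ℝ) :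
    (Icc u v ∩ g ⁻¹' {c}).encard ≤ k + 1 := by
  induction k generalizing g c with
  | zero =>
    have hzero : Icc u v ∩ deriv g ⁻¹' {0} = ∅ :=
      eq_empty_of_forall_notMem fun y hy => hk y hy.1 (by simpa using hy.2)
    simpa [hzero] using encard_Icc_inter_preimage_le_deriv (hg.differentiable (by simp)) u v c
  | succ k ih =>
    have hg' : ContDiff ℝ (k + 1) (deriv g) := (contDiff_succ_iff_deriv.1 hg).2.2
    calc (Icc u v ∩ g ⁻¹' {c}).encard ≤ (Icc u v ∩ deriv g ⁻¹' {0}).encard + 1 :=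
          encard_Icc_inter_preimage_le_deriv (hg.differentiable (by simp)) u v c
      _ ≤ (k + 1 : ℕ) + 1 := by
          gcongr
          exact ih hg' (by simpa only [iteratedDeriv_succ'] using hk) 0

theorem exists_mem_Ico_eq_of_connectedComponentIn_ne {g : ℝ → ℝ} (hg : Continuous g)
    {σ x y : ℝ} (hxy : x ≤ y) (hx : g x ≤ σ)
    (hne : connectedComponentIn {t | g t ≤ σ} x ≠ connectedComponentIn {t | g t ≤ σ} y) :
    ∃ z ∈ Ico x y, g z = σ := by
  by_contra! hσ
  have hsub : Icc x y ⊆ {t | g t ≤ σ} := by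
    intro w hw
    show g w ≤ σ
    by_contra! hw'
    obtain ⟨z, hz, hgz⟩ := intermediate_value_Icc hw.1 hg.continuousOn ⟨hx, hw'.le⟩
    have hzw : z ≠ w := by rintro rfl; exact hw'.ne' hgz
    exact hσ z ⟨hz.1, (lt_of_le_of_ne hz.2 hzw).trans_le hw.2⟩ hgz
  exact hne (connectedComponentIn_eq
    (isPreconnected_Icc.subset_connectedComponentIn (left_mem_Icc.2 hxy) hsub
      (right_mem_Icc.2 hxy)))

theorem encard_image_connectedComponentIn_le {g : ℝ → ℝ} (hg : Continuous g) (σ u v : ℝ) :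
    (connectedComponentIn {t | g t ≤ σ} '' ({t | g t ≤ σ} ∩ Icc u v)).encard ≤
      (Icc u v ∩ g ⁻¹' {σ}).encard + 1 := by
  obtain ⟨R, hRsub, hR⟩ := exists_subset_bijOn ({t | g t ≤ σ} ∩ Icc u v)
    (connectedComponentIn {t | g t ≤ σ})
  rw [← hR.image_eq, hR.injOn.encard_image]
  refine encard_le_encard_add_one_of_forall_exists_mem_Ico fun x hx y hy hxy => ?_
  obtain ⟨z, hz, hgz⟩ := exists_mem_Ico_eq_of_connectedComponentIn_ne hg hxy.le (hRsub hx).1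
    fun h => hxy.ne (hR.injOn hx hy h)
  exact ⟨z, ⟨⟨(hRsub hx).2.1.trans hz.1, hz.2.le.trans (hRsub hy).2.2⟩, hgz⟩, hz.1, hz.2⟩

theorem exists_le_mul_abs_iteratedDeriv_succ {n : ℕ} {f : ℝ → ℝ} {x B : ℝ}
    (hB : B ≤ ∑ k ∈ Finset.range (n + 1), |iteratedDeriv k f x|) (hfx : |f x| < B) :
    ∃ j < n, B - |f x| ≤ n * |iteratedDeriv (j + 1) f x| := by
  rw [Finset.sum_range_succ', iteratedDeriv_zero] at hB
  have hn : (Finset.range n).Nonempty := by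
    by_contra h
    rw [Finset.not_nonempty_iff_eq_empty.1 h, Finset.sum_empty] at hB
    linarith
  have hpos : (0 : ℝ) < n := by exact_mod_cast Finset.nonempty_range_iff.1 hn |>.bot_lt
  obtain ⟨j, hj, hle⟩ := Finset.exists_le_of_sum_le hn (f := fun _ => (B - |f x|) / n)
    (g := fun j => |iteratedDeriv (j + 1) f x|) (by
      rw [Finset.sum_const, Finset.card_range, nsmul_eq_mul, mul_div_cancel₀ _ hpos.ne']
      linarith)
  exact ⟨j, Finset.mem_range.1 hj, (div_le_iff₀' hpos).1 hle⟩

theorem ne_zero_on_Icc_of_abs_deriv_le {g : ℝ → ℝ} (hg : Differentiable ℝ g)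
    {A u v x₀ : ℝ} (hA : ∀ x, |deriv g x| ≤ A) (hx₀ : x₀ ∈ Icc u v)
    (hgx₀ : A * (v - u) < |g x₀|) :
    ∀ y ∈ Icc u v, g y ≠ 0 := by
  intro y hy hgy
  have hlip := (convex_univ (𝕜 := ℝ)).norm_image_sub_le_of_norm_deriv_le (f := g)
    (fun x _ => hg x) (fun x _ => hA x) (mem_univ y) (mem_univ x₀)
  simp only [Real.norm_eq_abs, hgy, sub_zero] at hlip
  have hdist : |x₀ - y| ≤ v - u :=
    abs_sub_le_iff.2 ⟨by linarith [hx₀.2, hy.1], by linarith [hx₀.1, hy.2]⟩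
  have hA0 : 0 ≤ A := (abs_nonneg _).trans (hA x₀)
  nlinarith [mul_le_mul_of_nonneg_left hdist hA0]

theorem encard_image_connectedComponentIn_abs_le {n : ℕ} {f : ℝ → ℝ}
    (hf : ContDiff ℝ (n + 1) f) {A B σ u v : ℝ}
    (hA : ∀ k ≤ n + 1, ∀ x, |iteratedDeriv k f x| ≤ A)
    (hB : ∀ x, B ≤ ∑ k ∈ Finset.range (n + 1), |iteratedDeriv k f x|)
    (hB₀ : 0 < B) (hσ : 2 * σ ≤ B) (huv : 2 * n * A * (v - u) < B) :
    (connectedComponentIn {y | |f y| ≤ σ} '' ({y | |f y| ≤ σ} ∩ Icc u v)).encard ≤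
      2 * n + 1 := by
  rcases eq_empty_or_nonempty ({y | |f y| ≤ σ} ∩ Icc u v) with hempty | ⟨x₀, hfx₀, hx₀⟩
  · simp [hempty]
  replace hfx₀ : |f x₀| ≤ σ := hfx₀
  obtain ⟨j, hjn, hj⟩ := exists_le_mul_abs_iteratedDeriv_succ (hB x₀)
    (by linarith [abs_nonneg (f x₀)])
  have hne : ∀ y ∈ Icc u v, iteratedDeriv (j + 1) f y ≠ 0 := by
    refine ne_zero_on_Icc_of_abs_deriv_le
      (hf.differentiable_iteratedDeriv _ (by exact_mod_cast (by omega : j + 1 < n + 1)))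
      (fun x => by rw [← iteratedDeriv_succ]; exact hA _ (by omega) x) hx₀ ?_
    have hn : (0 : ℝ) < n := by exact_mod_cast hjn.bot_lt
    nlinarith
  have hlevel : Icc u v ∩ (fun y => |f y|) ⁻¹' {σ} ⊆
      (Icc u v ∩ f ⁻¹' {σ}) ∪ (Icc u v ∩ f ⁻¹' {-σ}) := by
    rintro y ⟨hy, hfy⟩
    rcases (abs_eq ((abs_nonneg _).trans hfx₀)).1 hfy with h | h
    · exact Or.inl ⟨hy, h⟩
    · exact Or.inr ⟨hy, h⟩
  have hf' : ContDiff ℝ (j + 1) f := hf.of_le (by exact_mod_cast (by omega : j + 1 ≤ n + 1))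
  calc (connectedComponentIn {y | |f y| ≤ σ} '' ({y | |f y| ≤ σ} ∩ Icc u v)).encard
      ≤ (Icc u v ∩ (fun y => |f y|) ⁻¹' {σ}).encard + 1 :=
        encard_image_connectedComponentIn_le (g := fun y => |f y|) hf.continuous.abs σ u v
    _ ≤ ((j + 1 : ℕ) + (j + 1 : ℕ)) + 1 := by
        gcongr
        refine (encard_le_encard hlevel).trans ((encard_union_le _ _).trans ?_)
        gcongr <;> exact encard_Icc_inter_preimage_le hf' hne _
    _ ≤ 2 * n + 1 := by norm_cast; omega

theorem encard_image_inter_Icc_le {α : Type*} (φ : ℝ → α) (s : Set ℝ) {δ : ℝ}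
    (hδ : 0 < δ) {m : ℕ∞} (h : ∀ u, (φ '' (s ∩ Icc u (u + δ))).encard ≤ m) (a b : ℝ) :
    (φ '' (s ∩ Icc a b)).encard ≤ (⌊(b - a) / δ⌋₊ + 1 : ℕ) * m := by
  have hcover : s ∩ Icc a b ⊆
      ⋃ i ∈ Finset.range (⌊(b - a) / δ⌋₊ + 1), s ∩ Icc (a + i * δ) (a + i * δ + δ) := by
    rintro x ⟨hxs, hxa, hxb⟩
    have hx : 0 ≤ (x - a) / δ := div_nonneg (by linarith) hδ.le
    refine mem_biUnion (x := ⌊(x - a) / δ⌋₊) (Finset.mem_range.2 (Nat.lt_succ_of_le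
      (Nat.floor_le_floor (by gcongr)))) ⟨hxs, ?_, ?_⟩
    · have := (le_div_iff₀ hδ).1 (Nat.floor_le hx)
      linarith
    · have := (div_lt_iff₀ hδ).1 (Nat.lt_floor_add_one ((x - a) / δ))
      linarith
  calc (φ '' (s ∩ Icc a b)).encard
      ≤ (⋃ i ∈ Finset.range (⌊(b - a) / δ⌋₊ + 1),
          φ '' (s ∩ Icc (a + i * δ) (a + i * δ + δ))).encard := by
        rw [← image_iUnion₂]; exact encard_le_encard (image_mono hcover)
    _ ≤ ∑ i ∈ Finset.range (⌊(b - a) / δ⌋₊ + 1), m :=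
        (Finset.set_encard_biUnion_le _ _).trans (Finset.sum_le_sum fun i _ => h _)
    _ = (⌊(b - a) / δ⌋₊ + 1 : ℕ) * m := by simp

theorem components_count_bound_general (n : ℕ) (Aplus Aminus : ℝ)
    (hAminus : 0 < Aminus) :
    ∃ c : ℝ, 0 < c ∧
      ∀ f : ℝ → ℝ, ContDiff ℝ (n + 1) f →
        (∀ x : ℝ, ∑ k ∈ Finset.range (n + 2), |iteratedDeriv k f x| ≤ Aplus) →
        (∀ x : ℝ, Aminus ≤ ∑ k ∈ Finset.range (n + 1), |iteratedDeriv k f x|) →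
        ∀ σ : ℝ, 0 < σ → σ ≤ Aminus / 2 →
        ∀ a b : ℝ, a ≤ b →
          {C : Set ℝ | ∃ x ∈ {y : ℝ | |f y| ≤ σ} ∩ Icc a b,
              C = connectedComponentIn {y : ℝ | |f y| ≤ σ} x}.Finite ∧
          ({C : Set ℝ | ∃ x ∈ {y : ℝ | |f y| ≤ σ} ∩ Icc a b,
              C = connectedComponentIn {y : ℝ | |f y| ≤ σ} x}.ncard : ℝ)
            ≤ c * ((b - a) + 1) := by
  set A := max Aplus 1
  have hA : 0 < A := zero_lt_one.trans_le (le_max_right _ _)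
  set δ := Aminus / (2 * (n + 1) * A)
  have hδ : 0 < δ := by positivity
  have hδA : 2 * (n + 1) * A * δ = Aminus := mul_div_cancel₀ _ (by positivity)
  refine ⟨(2 * n + 1) * (δ⁻¹ + 1), by positivity, ?_⟩
  intro f hf hplus hminus σ hσ hσA a b hab
  have hbound : ∀ k ≤ n + 1, ∀ x, |iteratedDeriv k f x| ≤ A := fun k hk x =>
    ((Finset.single_le_sum (fun j _ => abs_nonneg (iteratedDeriv j f x))
      (Finset.mem_range.2 (by omega))).trans (hplus x)).trans (le_max_left _ _)
  have hlocal (u : ℝ) := encard_image_connectedComponentIn_abs_le (σ := σ) (u := u)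
    (v := u + δ) hf hbound hminus hAminus (by linarith) (by nlinarith)
  have himage : {C : Set ℝ | ∃ x ∈ {y : ℝ | |f y| ≤ σ} ∩ Icc a b,
      C = connectedComponentIn {y : ℝ | |f y| ≤ σ} x} =
      connectedComponentIn {y : ℝ | |f y| ≤ σ} '' ({y : ℝ | |f y| ≤ σ} ∩ Icc a b) := by
    ext; simp [eq_comm]
  obtain ⟨hfin, hcard⟩ := encard_le_coe_iff_finite_ncard_le.1
    ((encard_image_inter_Icc_le _ _ hδ hlocal a b).trans_eq (by norm_cast))
  rw [himage]
  refine ⟨hfin, ?_⟩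
  calc (_ : ℝ) ≤ ((⌊(b - a) / δ⌋₊ + 1 : ℕ) * (2 * n + 1) : ℕ) := by exact_mod_cast hcard
    _ ≤ ((b - a) / δ + 1) * (2 * n + 1) := by
        push_cast
        gcongr
        exact Nat.floor_le (div_nonneg (by linarith) hδ.le)
    _ ≤ (2 * n + 1) * (δ⁻¹ + 1) * ((b - a) + 1) := by
        rw [div_eq_mul_inv]
        nlinarith [inv_pos.2 hδ, Nat.cast_nonneg (α := ℝ) n]

/-- Lemma 5(a) of Molchanov--Vainberg: for a `C^{n+1}` function `f` with
`‖f‖_{C^{n+1}} ≤ A⁺` and `∑_{k=0}^n |f^{(k)}(x)| ≥ A⁻ > 0` everywhere, there is a constant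
`c > 0` depending only on `A⁺, A⁻, n` such that for every `0 < σ ≤ A⁻/2` and every bounded
interval `Δ = [a,b]`, the number of connected components of `Γ_σ = {x : |f x| ≤ σ}` meeting
`Δ` is finite and bounded by `c(|Δ| + 1)`. -/
theorem components_count_bound (n : ℕ) (hn : 1 ≤ n) (Aplus Aminus : ℝ)
    (hAminus : 0 < Aminus) :
    ∃ c : ℝ, 0 < c ∧
      ∀ f : ℝ → ℝ, ContDiff ℝ (n + 1) f →
        (∀ x : ℝ, ∑ k ∈ Finset.range (n + 2), |iteratedDeriv k f x| ≤ Aplus) →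
        (∀ x : ℝ, Aminus ≤ ∑ k ∈ Finset.range (n + 1), |iteratedDeriv k f x|) →
        ∀ σ : ℝ, 0 < σ → σ ≤ Aminus / 2 →
        ∀ a b : ℝ, a ≤ b →
          {C : Set ℝ | ∃ x ∈ {y : ℝ | |f y| ≤ σ} ∩ Icc a b,
              C = connectedComponentIn {y : ℝ | |f y| ≤ σ} x}.Finite ∧
          ({C : Set ℝ | ∃ x ∈ {y : ℝ | |f y| ≤ σ} ∩ Icc a b,
              C = connectedComponentIn {y : ℝ | |f y| ≤ σ} x}.ncard : ℝ)
            ≤ c * ((b - a) + 1) :=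
  components_count_bound_general n Aplus Aminus hAminus
end

section
/- Let n ≥ 1 and let f : ℝ → ℝ be of class C^{n+1} with ‖f‖_{C^{n+1}} := Σ_{k=0}^{n+1} sup_x |f^{(k)}(x)| = A⁺ < ∞ and Σ_{k=0}^{n} |f^{(k)}(x)| ≥ A⁻ > 0 for all x ∈ ℝ. Then there exists a constant c > 0 depending only on A⁺, A⁻ and n such that for every σ with 0 < σ ≤ A⁻/2 and every bounded interval Δ ⊂ ℝ, the Lebesgue measure of Γ_σ ∩ Δ = {x ∈ Δ : |f(x)| ≤ σ} is at most c(|Δ| + 1)σ^{1/n}, where |Δ| denotes the length of Δ. -/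
/-!
At a point where `|f| ≤ σ ≤ A⁻/2`, the lower bound forces `|f⁽ʲ⁾| ≥ A⁻/(2n)` for some
`1 ≤ j ≤ n`, and the bound on `f⁽ʲ⁺¹⁾` keeps `f⁽ʲ⁾` of one sign and at least `A⁻/(4n)` on a window
of length `A⁻/(4nA⁺)` around it. On such a window the van der Corput sublevel estimate
`|{|g| ≤ σ}| ≤ 4ʲ (σ/δ)^(1/j)` for `g⁽ʲ⁾ ≥ δ` applies; it is proved by induction on `j`: where
`|g⁽ʲ⁻¹⁾| ≥ μ` use the induction hypothesis, and the rest, where the monotone `g⁽ʲ⁻¹⁾` is small,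
has length at most `2μ/δ`. Covering `Δ` by `O(|Δ| + 1)` windows gives the bound.
-/

open Set MeasureTheory

theorem volume_abs_le_inter_le_of_le_deriv {p : ℝ → ℝ} (hp : Differentiable ℝ p) {s : Set ℝ}
    (hs : s.OrdConnected) {δ : ℝ} (hδ : 0 < δ) (hderiv : ∀ y ∈ s, δ ≤ deriv p y) (μ : ℝ) :
    volume ({y | |p y| ≤ μ} ∩ s) ≤ ENNReal.ofReal (2 * μ / δ) := by
  have growth : ∀ x ∈ s, ∀ y ∈ s, x ≤ y → δ * (y - x) ≤ p y - p x :=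
    hs.convex.mul_sub_le_image_sub_of_le_deriv hp.continuous.continuousOn
      hp.differentiableOn fun z hz => hderiv z (interior_subset hz)
  have close : ∀ x ∈ {y | |p y| ≤ μ} ∩ s, ∀ y ∈ {y | |p y| ≤ μ} ∩ s, x ≤ y →
      y - x ≤ 2 * μ / δ := fun x ⟨hxμ, hxs⟩ y ⟨hyμ, hys⟩ hxy => by
    rw [mem_ofPred_eq, abs_le] at hxμ hyμ
    rw [le_div_iff₀ hδ, mul_comm]
    linarith [growth x hxs y hys hxy]
  refine (Real.volume_le_diam _).trans (Metric.ediam_le fun x hx y hy => ?_)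
  rw [edist_dist, Real.dist_eq]
  apply ENNReal.ofReal_le_ofReal
  rcases le_total x y with hxy | hyx
  · rw [abs_sub_comm, abs_of_nonneg (sub_nonneg.mpr hxy)]
    exact close x hx y hy hxy
  · rw [abs_of_nonneg (sub_nonneg.mpr hyx)]
    exact close y hy x hx hyx

theorem Set.OrdConnected.inter_preimage_Iic_of_monotoneOn {α β : Type*} [Preorder α]
    [Preorder β] {s : Set α} (hs : s.OrdConnected) {p : α → β} (hp : MonotoneOn p s)
    (t : β) : (s ∩ p ⁻¹' Iic t).OrdConnected := by
  obtain ⟨u, hu, heq⟩ := ordConnected_Iic.preimage_monotoneOn hp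
  exact heq ▸ hs.inter hu

theorem Set.OrdConnected.inter_preimage_Ici_of_monotoneOn {α β : Type*} [Preorder α]
    [Preorder β] {s : Set α} (hs : s.OrdConnected) {p : α → β} (hp : MonotoneOn p s)
    (t : β) : (s ∩ p ⁻¹' Ici t).OrdConnected := by
  obtain ⟨u, hu, heq⟩ := ordConnected_Ici.preimage_monotoneOn hp
  exact heq ▸ hs.inter hu

theorem measure_inter_le_add_abs_le_add {α : Type*} [MeasurableSpace α] (ν : Measure α)
    (E s : Set α) (p : α → ℝ) (c : ℝ) :
    ν (E ∩ s) ≤ ν (E ∩ (s ∩ p ⁻¹' Iic (-c))) + ν ({y | |p y| ≤ c} ∩ s) +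
      ν (E ∩ (s ∩ p ⁻¹' Ici c)) := by
  have hcover : E ∩ s ⊆ E ∩ (s ∩ p ⁻¹' Iic (-c)) ∪ {y | |p y| ≤ c} ∩ s ∪
      E ∩ (s ∩ p ⁻¹' Ici c) := by
    rintro y ⟨hyE, hys⟩
    rcases le_or_gt (p y) (-c) with hlo | hlo
    · exact Or.inl (Or.inl ⟨hyE, hys, hlo⟩)
    rcases le_or_gt c (p y) with hhi | hhi
    · exact Or.inr ⟨hyE, hys, hhi⟩
    · exact Or.inl (Or.inr ⟨abs_le.mpr ⟨hlo.le, hhi.le⟩, hys⟩)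
  exact (measure_mono hcover).trans <| (measure_union_le _ _).trans <|
    add_le_add_left (measure_union_le _ _) _

theorem rpow_one_div_le_mul_rpow_one_div {x B j n : ℝ} (hx : 0 ≤ x) (hxB : x ≤ B) (hB : 1 ≤ B)
    (hj : 1 ≤ j) (hjn : j ≤ n) : x ^ (1 / j) ≤ B * x ^ (1 / n) := by
  have hexp : 1 / n ≤ 1 / j := one_div_le_one_div_of_le (by linarith) hjn
  have hn0 : 0 ≤ 1 / n := one_div_nonneg.mpr (by linarith)
  rcases le_total x 1 with hx1 | hx1
  · calc x ^ (1 / j) ≤ x ^ (1 / n) := Real.rpow_le_rpow_of_exponent_ge' hx hx1 hn0 hexp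
      _ ≤ B * x ^ (1 / n) := le_mul_of_one_le_left (by positivity) hB
  · calc x ^ (1 / j) ≤ x ^ (1 : ℝ) :=
          Real.rpow_le_rpow_of_exponent_le hx1 ((div_le_one (by linarith)).mpr hj)
      _ ≤ B * 1 := by rw [Real.rpow_one, mul_one]; exact hxB
      _ ≤ B * x ^ (1 / n) := by gcongr; exact Real.one_le_rpow hx1 hn0

theorem rpow_div_rpow_one_div_add_one {x m : ℝ} (hx : 0 < x) (hm : 0 < m) :
    (x / x ^ (1 / (m + 1))) ^ (1 / m) = x ^ (1 / (m + 1)) := by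
  have : x / x ^ (1 / (m + 1)) = x ^ (1 - 1 / (m + 1)) := by
    rw [Real.rpow_sub hx, Real.rpow_one]
  rw [this, ← Real.rpow_mul hx.le]
  congr 1
  field_simp
  ring

theorem exists_le_abs_of_le_sum_abs (a : ℕ → ℝ) {n : ℕ} (hn : 1 ≤ n) {B : ℝ}
    (hsum : B ≤ ∑ k ∈ Finset.range (n + 1), |a k|) (h0 : |a 0| ≤ B / 2) :
    ∃ j, 1 ≤ j ∧ j ≤ n ∧ B / (2 * n) ≤ |a j| := by
  have hpos : (0 : ℝ) < n := by exact_mod_cast hn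
  rw [Finset.sum_range_succ'] at hsum
  have : ∑ _i ∈ Finset.range n, B / (2 * n) ≤ ∑ i ∈ Finset.range n, |a (i + 1)| := by
    rw [Finset.sum_const, Finset.card_range, nsmul_eq_mul]
    field_simp
    linarith
  obtain ⟨i, hi, hle⟩ := Finset.exists_le_of_sum_le (Finset.nonempty_range_iff.mpr (by omega)) this
  exact ⟨i + 1, by omega, Finset.mem_range.mp hi, hle⟩

theorem sub_mul_abs_sub_le_of_abs_deriv_le {h : ℝ → ℝ} (hh : Differentiable ℝ h) {A : ℝ}
    (hA : ∀ z, |deriv h z| ≤ A) (x y : ℝ) : h x - A * |y - x| ≤ h y := by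
  have := convex_univ.norm_image_sub_le_of_norm_deriv_le (fun z _ => hh z)
    (fun z _ => (Real.norm_eq_abs _).trans_le (hA z)) (mem_univ x) (mem_univ y)
  rw [Real.norm_eq_abs, Real.norm_eq_abs] at this
  linarith [neg_abs_le (h y - h x)]

theorem volume_abs_le_inter_le_of_le_iteratedDeriv {k : ℕ} (hk : 1 ≤ k) {g : ℝ → ℝ}
    (hg : ContDiff ℝ k g) {s : Set ℝ} (hs : s.OrdConnected) {δ σ : ℝ} (hδ : 0 < δ) (hσ : 0 < σ)
    (hderiv : ∀ y ∈ s, δ ≤ iteratedDeriv k g y) :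
    volume ({y | |g y| ≤ σ} ∩ s) ≤ ENNReal.ofReal (4 ^ k * (σ / δ) ^ (1 / (k : ℝ))) := by
  induction k, hk using Nat.le_induction generalizing g s δ with
  | base =>
    rw [iteratedDeriv_one] at hderiv
    refine (volume_abs_le_inter_le_of_le_deriv (hg.differentiable one_ne_zero) hs hδ hderiv σ).trans
      (ENNReal.ofReal_le_ofReal ?_)
    rw [Nat.cast_one, div_one, Real.rpow_one, pow_one, mul_div_assoc]
    gcongr
    norm_num
  | succ m hm IH =>
    set p := iteratedDeriv m g
    have hp : Differentiable ℝ p := hg.differentiable_iteratedDeriv m (by norm_cast; omega)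
    have hp' : ∀ y ∈ s, δ ≤ deriv p y := fun y hy => by
      rw [← iteratedDeriv_succ]; exact hderiv y hy
    have hmono : MonotoneOn p s := monotoneOn_of_deriv_nonneg hs.convex hp.continuous.continuousOn
      hp.differentiableOn fun y hy => hδ.le.trans (hp' y (interior_subset hy))
    have hgm : ContDiff ℝ m g := hg.of_le (by norm_cast; omega)
    -- `μ` balances the inductive bound `(σ/μ)^(1/m)` against the length `2μ/δ` of the middle piece.
    set t := (σ / δ) ^ (1 / ((m : ℝ) + 1))
    have ht : 0 < t := by positivity
    set μ := δ * t with hμdef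
    have hμ : 0 < μ := mul_pos hδ ht
    have hσμ : (σ / μ) ^ (1 / (m : ℝ)) = t := by
      rw [show σ / μ = σ / δ / t by rw [hμdef]; field_simp]
      exact rpow_div_rpow_one_div_add_one (by positivity) (by norm_cast)
    have hlow : volume ({y | |g y| ≤ σ} ∩ (s ∩ p ⁻¹' Iic (-μ))) ≤ ENNReal.ofReal (4 ^ m * t) := by
      have := IH hgm.neg (hs.inter_preimage_Iic_of_monotoneOn hmono (-μ)) hμ
        (δ := μ) (g := -g) fun y hy => by rw [iteratedDeriv_neg]; exact le_neg.mpr hy.2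
      simpa only [Pi.neg_apply, abs_neg, hσμ] using this
    have hhigh : volume ({y | |g y| ≤ σ} ∩ (s ∩ p ⁻¹' Ici μ)) ≤ ENNReal.ofReal (4 ^ m * t) := by
      rw [← hσμ]
      exact IH hgm (hs.inter_preimage_Ici_of_monotoneOn hmono μ) hμ fun y hy => hy.2
    have hmid : volume ({y | |p y| ≤ μ} ∩ s) ≤ ENNReal.ofReal (2 * t) := by
      have := volume_abs_le_inter_le_of_le_deriv hp hs hδ hp' μ
      rwa [show 2 * μ / δ = 2 * t by rw [hμdef]; field_simp] at this
    calc volume ({y | |g y| ≤ σ} ∩ s)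
        ≤ ENNReal.ofReal (4 ^ m * t) + ENNReal.ofReal (2 * t) + ENNReal.ofReal (4 ^ m * t) :=
          (measure_inter_le_add_abs_le_add volume _ s p μ).trans
            (add_le_add (add_le_add hlow hmid) hhigh)
      _ = ENNReal.ofReal ((2 * 4 ^ m + 2) * t) := by
          rw [← ENNReal.ofReal_add (by positivity) (by positivity),
            ← ENNReal.ofReal_add (by positivity) (by positivity)]
          ring_nf
      _ ≤ ENNReal.ofReal (4 ^ (m + 1) * (σ / δ) ^ (1 / ((m + 1 : ℕ) : ℝ))) := by
          push_cast
          gcongr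
          rw [pow_succ]
          linarith [one_le_pow₀ (M₀ := ℝ) (a := 4) (n := m) (by norm_num)]

theorem volume_abs_le_inter_Icc_le_of_le_abs_iteratedDeriv {j : ℕ} (hj : 1 ≤ j) {g : ℝ → ℝ}
    (hg : ContDiff ℝ (j + 1) g) {A δ σ : ℝ} (hA : 0 < A) (hδ : 0 < δ) (hσ : 0 < σ)
    (hgA : ∀ z, |iteratedDeriv (j + 1) g z| ≤ A) {s x : ℝ} (hx : x ∈ Icc s (s + δ / (2 * A)))
    (hgx : δ ≤ |iteratedDeriv j g x|) :
    volume ({y | |g y| ≤ σ} ∩ Icc s (s + δ / (2 * A))) ≤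
      ENNReal.ofReal (4 ^ j * (σ / (δ / 2)) ^ (1 / (j : ℝ))) := by
  wlog hpos : δ ≤ iteratedDeriv j g x generalizing g
  · have hneg : δ ≤ iteratedDeriv j (-g) x := by
      rw [iteratedDeriv_neg]
      exact le_neg.mpr ((le_abs'.mp hgx).resolve_right hpos)
    simpa using this hg.neg (by simpa using hgA) (by simpa using hgx) hneg
  have hdiff : Differentiable ℝ (iteratedDeriv j g) :=
    hg.differentiable_iteratedDeriv j (by norm_cast; omega)
  refine volume_abs_le_inter_le_of_le_iteratedDeriv hj (hg.of_le (by norm_cast; omega))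
    ordConnected_Icc (by positivity) hσ fun y hy => ?_
  have hyx : A * |y - x| ≤ δ / 2 := by
    have : |y - x| ≤ δ / (2 * A) :=
      abs_sub_le_iff.mpr ⟨by linarith [hy.2, hx.1], by linarith [hy.1, hx.2]⟩
    calc A * |y - x| ≤ A * (δ / (2 * A)) := by gcongr
      _ = δ / 2 := by field_simp
  have := sub_mul_abs_sub_le_of_abs_deriv_le hdiff
    (fun z => by rw [← iteratedDeriv_succ]; exact hgA z) x y
  linarith

theorem volume_abs_le_inter_Icc_le {n : ℕ} (hn : 1 ≤ n) {f : ℝ → ℝ} (hf : ContDiff ℝ (n + 1) f)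
    {A Aminus σ : ℝ} (hA : 0 < A) (hAminus : 0 < Aminus)
    (hup : ∀ x, ∑ k ∈ Finset.range (n + 2), |iteratedDeriv k f x| ≤ A)
    (hlow : ∀ x, Aminus ≤ ∑ k ∈ Finset.range (n + 1), |iteratedDeriv k f x|)
    (hσ : 0 < σ) (hσA : σ ≤ Aminus / 2) (s : ℝ) :
    volume ({y | |f y| ≤ σ} ∩ Icc s (s + Aminus / (2 * n) / (2 * A))) ≤
      ENNReal.ofReal
        (4 ^ n * (2 * n) / (Aminus / (4 * n)) ^ (1 / (n : ℝ)) * σ ^ (1 / (n : ℝ))) := by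
  rcases eq_empty_or_nonempty ({y | |f y| ≤ σ} ∩ Icc s (s + Aminus / (2 * n) / (2 * A))) with
    hempty | ⟨x, hxσ, hx⟩
  · simp [hempty]
  have hn' : (1 : ℝ) ≤ n := by exact_mod_cast hn
  obtain ⟨j, hj, hjn, hjx⟩ := exists_le_abs_of_le_sum_abs (fun k => iteratedDeriv k f x) hn
    (hlow x) (by simpa using hxσ.out.trans hσA)
  have hjA : ∀ z, |iteratedDeriv (j + 1) f z| ≤ A := fun z =>
    (Finset.single_le_sum (fun k _ => abs_nonneg (iteratedDeriv k f z))
      (Finset.mem_range.mpr (by omega))).trans (hup z)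
  refine (volume_abs_le_inter_Icc_le_of_le_abs_iteratedDeriv hj (hf.of_le (by norm_cast; omega))
    hA (by positivity) hσ hjA hx hjx).trans (ENNReal.ofReal_le_ofReal ?_)
  have hδ : Aminus / (2 * n) / 2 = Aminus / (4 * n) := by field_simp; ring
  rw [hδ]
  have hx2n : σ / (Aminus / (4 * n)) ≤ 2 * n := by
    rw [div_le_iff₀ (by positivity)]
    field_simp
    linarith
  calc 4 ^ j * (σ / (Aminus / (4 * n))) ^ (1 / (j : ℝ))
      ≤ 4 ^ n * (2 * n * (σ / (Aminus / (4 * n))) ^ (1 / (n : ℝ))) := by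
        gcongr
        · norm_num
        · exact rpow_one_div_le_mul_rpow_one_div (by positivity) hx2n (by linarith)
            (by exact_mod_cast hj) (by exact_mod_cast hjn)
    _ = _ := by rw [Real.div_rpow hσ.le (by positivity)]; ring

theorem volume_inter_Icc_le_of_forall_Icc_add {E : Set ℝ} {r V : ℝ} (hr : 0 < r) (hV : 0 ≤ V)
    (hE : ∀ s, volume (E ∩ Icc s (s + r)) ≤ ENNReal.ofReal V) {a b : ℝ} (hab : a ≤ b) :
    volume (E ∩ Icc a b) ≤ ENNReal.ofReal (((b - a) / r + 1) * V) := by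
  set N := ⌊(b - a) / r⌋₊ + 1
  have hcover : E ∩ Icc a b ⊆ ⋃ i ∈ Finset.range N, E ∩ Icc (a + i * r) (a + i * r + r) := by
    rintro y ⟨hyE, hya, hyb⟩
    have hy0 : 0 ≤ (y - a) / r := div_nonneg (by linarith) hr.le
    have hiN : ⌊(y - a) / r⌋₊ < N :=
      Nat.lt_succ_of_le (Nat.floor_le_floor (by gcongr))
    refine mem_biUnion (Finset.mem_range.mpr hiN) ⟨hyE, ?_, ?_⟩
    · have := Nat.floor_le hy0
      rw [le_div_iff₀ hr] at this
      linarith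
    · have := Nat.lt_floor_add_one ((y - a) / r)
      rw [div_lt_iff₀ hr] at this
      linarith
  have hN : (N : ℝ) ≤ (b - a) / r + 1 := by
    have := Nat.floor_le (div_nonneg (sub_nonneg.mpr hab) hr.le)
    push_cast [N]
    linarith
  calc volume (E ∩ Icc a b)
      ≤ ∑ i ∈ Finset.range N, volume (E ∩ Icc (a + i * r) (a + i * r + r)) :=
        (measure_mono hcover).trans (measure_biUnion_finset_le _ _)
    _ ≤ ∑ _i ∈ Finset.range N, ENNReal.ofReal V := Finset.sum_le_sum fun i _ => hE _
    _ = ENNReal.ofReal (N * V) := by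
        rw [Finset.sum_const, Finset.card_range, nsmul_eq_mul, ENNReal.ofReal_mul (by positivity),
          ENNReal.ofReal_natCast]
    _ ≤ ENNReal.ofReal (((b - a) / r + 1) * V) := by gcongr

/-- Lemma 5 of Molchanov--Vainberg, combined form: for a `C^{n+1}` function `f` with
`‖f‖_{C^{n+1}} ≤ A⁺` and `∑_{k=0}^n |f^{(k)}(x)| ≥ A⁻ > 0` everywhere, there is a constant
`c > 0` depending only on `A⁺, A⁻, n` such that for every `0 < σ ≤ A⁻/2` and every bounded
interval `Δ = [a,b]`, the Lebesgue measure of `{x ∈ Δ : |f x| ≤ σ}` is at most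
`c (|Δ| + 1) σ^{1/n}`. -/
theorem sublevel_measure_bound (n : ℕ) (hn : 1 ≤ n) (Aplus Aminus : ℝ)
    (hAminus : 0 < Aminus) :
    ∃ c : ℝ, 0 < c ∧
      ∀ f : ℝ → ℝ, ContDiff ℝ (n + 1) f →
        (∀ x : ℝ, ∑ k ∈ Finset.range (n + 2), |iteratedDeriv k f x| ≤ Aplus) →
        (∀ x : ℝ, Aminus ≤ ∑ k ∈ Finset.range (n + 1), |iteratedDeriv k f x|) →
        ∀ σ : ℝ, 0 < σ → σ ≤ Aminus / 2 →
        ∀ a b : ℝ, a ≤ b →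
          volume ({y : ℝ | |f y| ≤ σ} ∩ Icc a b)
            ≤ ENNReal.ofReal (c * ((b - a) + 1) * σ ^ (1 / (n : ℝ))) := by
  have hn' : (0 : ℝ) < n := by exact_mod_cast hn
  set A := max Aplus 1
  have hA : 0 < A := lt_max_of_lt_right one_pos
  set r := Aminus / (2 * n) / (2 * A)
  have hr : 0 < r := by positivity
  set K := 4 ^ n * (2 * n) / (Aminus / (4 * n)) ^ (1 / (n : ℝ))
  refine ⟨max (1 / r) 1 * K, by positivity, fun f hf hup hlow σ hσ hσA a b hab => ?_⟩
  have hwindow := volume_abs_le_inter_Icc_le hn hf hA hAminus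
    (fun x => (hup x).trans (le_max_left _ _)) hlow hσ hσA
  refine (volume_inter_Icc_le_of_forall_Icc_add hr (by positivity) hwindow hab).trans
    (ENNReal.ofReal_le_ofReal ?_)
  have hcount : (b - a) / r + 1 ≤ max (1 / r) 1 * ((b - a) + 1) := by
    rw [div_eq_inv_mul, ← one_div, mul_add, mul_one]
    gcongr
    exacts [le_max_left _ _, le_max_right _ _]
  calc ((b - a) / r + 1) * (K * σ ^ (1 / (n : ℝ)))
      ≤ max (1 / r) 1 * ((b - a) + 1) * (K * σ ^ (1 / (n : ℝ))) := by gcongr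
    _ = _ := by ring
end

section
/- Let k ≥ 1, σ > 0, c₂ > 0, h > 0, x₁ ∈ ℝ, and let f : ℝ → ℝ be k-times continuously differentiable on [x₁, x₁ + h] with |f(x)| ≤ σ and |f^{(k)}(x)| ≥ c₂ for all x ∈ [x₁, x₁ + h]. Then h ≤ 2k (σ/c₂)^{1/k}. -/
/-!
Put `t = h / k`. Each forward difference `g ↦ g (· + t) - g` at most doubles the sup bound of a
function, while by the mean value theorem it multiplies a lower bound on the absolute value of the
last derivative in a chain `f, f', …, f^{(k)}` by `t`. After `k` differences on the shrinking
intervals `[x₁, x₁ + (k - j) t]` we reach a single point, where `c₂ t^k ≤ 2^k σ`.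
-/

open Set

def HasDerivChainOn (n : ℕ) (F : ℕ → ℝ → ℝ) (s : Set ℝ) : Prop :=
  ∀ j < n, ∀ x ∈ s, HasDerivWithinAt (F j) (F (j + 1) x) s x

lemma hasDerivChainOn_iteratedDerivWithin {n : ℕ} {f : ℝ → ℝ} {s : Set ℝ}
    (hf : ContDiffOn ℝ n f s) (hs : UniqueDiffOn ℝ s) :
    HasDerivChainOn n (fun j => iteratedDerivWithin j f s) s := by
  intro j hj x hx
  show HasDerivWithinAt _ (iteratedDerivWithin (j + 1) f s x) s x
  rw [iteratedDerivWithin_succ]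
  exact ((hf.differentiableOn_iteratedDerivWithin (by exact_mod_cast hj) hs) x hx).hasDerivWithinAt

lemma hasDerivChainOn_fwdDiff {n : ℕ} {F : ℕ → ℝ → ℝ} {s s' : Set ℝ} {t : ℝ}
    (hF : HasDerivChainOn n F s) (hs' : s' ⊆ s) (hshift : ∀ x ∈ s', x + t ∈ s) :
    HasDerivChainOn n (fun j => fwdDiff t (F j)) s' := by
  intro j hj x hx
  have hshifted : HasDerivWithinAt (fun y => F j (y + t)) (F (j + 1) (x + t)) s' x := by
    simpa [Function.comp_def] using (hF j hj (x + t) (hshift x hx)).comp x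
      ((hasDerivWithinAt_id x s').add_const t) hshift
  exact hshifted.sub ((hF j hj x (hs' hx)).mono hs')

lemma mul_sub_le_abs_sub_of_le_abs_deriv {f f' : ℝ → ℝ} {a b c : ℝ} (hab : a ≤ b)
    (hf : ∀ x ∈ Icc a b, HasDerivWithinAt f (f' x) (Icc a b) x)
    (hc : ∀ x ∈ Ioo a b, c ≤ |f' x|) :
    c * (b - a) ≤ |f b - f a| := by
  rcases hab.eq_or_lt with rfl | hab
  · simp
  obtain ⟨ξ, hξ, hslope⟩ := exists_hasDerivAt_eq_slope f f' hab
    (fun x hx => (hf x hx).continuousWithinAt)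
    (fun x hx => (hf x (Ioo_subset_Icc_self hx)).hasDerivAt (Icc_mem_nhds hx.1 hx.2))
  have hba : 0 < b - a := sub_pos.mpr hab
  calc c * (b - a) ≤ |f' ξ| * (b - a) := by gcongr; exact hc ξ hξ
    _ = |f b - f a| := by rw [hslope, abs_div, abs_of_pos hba, div_mul_cancel₀ _ hba.ne']

lemma HasDerivChainOn.mul_pow_le_two_pow_mul {n : ℕ} {F : ℕ → ℝ → ℝ} {a t c σ : ℝ}
    (ht : 0 ≤ t) (hF : HasDerivChainOn n F (Icc a (a + n * t)))
    (hσ : ∀ x ∈ Icc a (a + n * t), |F 0 x| ≤ σ)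
    (hc : ∀ x ∈ Icc a (a + n * t), c ≤ |F n x|) :
    c * t ^ n ≤ 2 ^ n * σ := by
  induction n generalizing F c σ with
  | zero =>
    have ha : a ∈ Icc a (a + (0 : ℕ) * t) := by simp
    simpa using (hc a ha).trans (hσ a ha)
  | succ n ih =>
    set s := Icc a (a + (n + 1 : ℕ) * t)
    set s' := Icc a (a + n * t)
    have hs' : s' ⊆ s := Icc_subset_Icc le_rfl (by push_cast; linarith)
    have hshift : ∀ x ∈ s', x + t ∈ s := fun x hx => by
      constructor <;> push_cast <;> linarith [hx.1, hx.2]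
    have hdiff0 : ∀ x ∈ s', |fwdDiff t (F 0) x| ≤ 2 * σ := fun x hx =>
      calc |F 0 (x + t) - F 0 x| ≤ |F 0 (x + t)| + |F 0 x| := abs_sub _ _
        _ ≤ 2 * σ := by linarith [hσ _ (hshift x hx), hσ _ (hs' hx)]
    have hdiffn : ∀ x ∈ s', c * t ≤ |fwdDiff t (F n) x| := fun x hx => by
      have hsub : Icc x (x + t) ⊆ s := Icc_subset_Icc (hs' hx).1 (hshift x hx).2
      simpa [fwdDiff] using mul_sub_le_abs_sub_of_le_abs_deriv (by linarith)
        (fun y hy => (hF n n.lt_succ_self y (hsub hy)).mono hsub)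
        (fun y hy => hc y (hsub (Ioo_subset_Icc_self hy)))
    have hchain : HasDerivChainOn n (fun j => fwdDiff t (F j)) s' := fun j hj =>
      hasDerivChainOn_fwdDiff hF hs' hshift j (hj.trans n.lt_succ_self)
    calc c * t ^ (n + 1) = c * t * t ^ n := by ring
      _ ≤ 2 ^ n * (2 * σ) := ih hchain hdiff0 hdiffn
      _ = 2 ^ (n + 1) * σ := by ring

lemma le_mul_rpow_one_div_of_pow_le_pow_mul {t A B : ℝ} {n : ℕ} (hn : n ≠ 0) (ht : 0 ≤ t)
    (hA : 0 ≤ A) (hB : 0 ≤ B) (h : t ^ n ≤ A ^ n * B) :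
    t ≤ A * B ^ (1 / (n : ℝ)) := by
  rw [one_div]
  calc t = (t ^ n) ^ (n⁻¹ : ℝ) := (Real.pow_rpow_inv_natCast ht hn).symm
    _ ≤ (A ^ n * B) ^ (n⁻¹ : ℝ) := by gcongr
    _ = A * B ^ (n⁻¹ : ℝ) := by
      rw [Real.mul_rpow (by positivity) hB, Real.pow_rpow_inv_natCast hA hn]

/-- If `|f| ≤ σ` on `[x₁, x₁ + h]` while `|f^{(k)}| ≥ c₂ > 0` there, then
`h ≤ 2 k (σ/c₂)^{1/k}`. -/
theorem interval_length_bound (k : ℕ) (hk : 1 ≤ k) (σ c₂ h : ℝ)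
    (hσ : 0 < σ) (hc₂ : 0 < c₂) (hh : 0 < h) (x₁ : ℝ) (f : ℝ → ℝ)
    (hf : ContDiffOn ℝ k f (Icc x₁ (x₁ + h)))
    (hfσ : ∀ x ∈ Icc x₁ (x₁ + h), |f x| ≤ σ)
    (hfk : ∀ x ∈ Icc x₁ (x₁ + h), c₂ ≤ |iteratedDerivWithin k f (Icc x₁ (x₁ + h)) x|) :
    h ≤ 2 * k * (σ / c₂) ^ (1 / (k : ℝ)) := by
  have hk0 : (0 : ℝ) < k := by exact_mod_cast hk
  set t := h / k
  have hkt : x₁ + k * t = x₁ + h := by rw [mul_div_cancel₀ h hk0.ne']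
  have hchain := hasDerivChainOn_iteratedDerivWithin hf (uniqueDiffOn_Icc (by linarith))
  rw [← hkt] at hchain hfσ hfk
  have hpow : c₂ * t ^ k ≤ 2 ^ k * σ :=
    hchain.mul_pow_le_two_pow_mul (by positivity) (by simpa using hfσ) hfk
  have ht : t ≤ 2 * (σ / c₂) ^ (1 / (k : ℝ)) := by
    refine le_mul_rpow_one_div_of_pow_le_pow_mul (by omega) (by positivity) zero_le_two
      (by positivity) ?_
    rw [← mul_div_assoc, le_div_iff₀ hc₂]
    linarith
  calc h = k * t := by rw [mul_div_cancel₀ h hk0.ne']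
    _ ≤ k * (2 * (σ / c₂) ^ (1 / (k : ℝ))) := by gcongr
    _ = 2 * k * (σ / c₂) ^ (1 / (k : ℝ)) := by ring
end
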